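/- Let p be an odd prime and let ζ ∈ ℤ_p be a primitive (p−1)-st root of unity. In V := ℚ_p[X]/(X^p) with x the class of X, set s_i := 1 − Σ_{m=0}^{p−1} C(ζ^i, m)(−x)^m (the truncation mod X^p of 1 − (1−x)^{ζ^i}). Then for every integer n with 1 ≤ n ≤ p−1, the coefficient c ∈ ℚ_p of x^{p−1} in Σ_{i=0}^{p−2} (s_i)^n lies in ℤ_p and satisfies c ≡ −1 (mod p·ℤ_p), i.e. |c + 1|_p ≤ 1/p. (Equivalently, the eigenspace projection π_0 = (1/(p−1))Σ_i ψ_{ζ^i} satisfies π_0(x^n) ≡ x^{p−1} mod p for 1 ≤ n ≤ p−1.) -/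

import Mathlib

open Polynomial

noncomputable def pbinom (p : ℕ) [Fact p.Prime] (y : ℚ_[p]) (n : ℕ) : ℚ_[p] :=
  (descPochhammer ℚ_[p] n).eval y / (n.factorial : ℚ_[p])

noncomputable abbrev TruncV (p : ℕ) [Fact p.Prime] : Type :=
  Polynomial ℚ_[p] ⧸ Ideal.span {(Polynomial.X : Polynomial ℚ_[p]) ^ p}

noncomputable def xV (p : ℕ) [Fact p.Prime] : TruncV p :=
  Ideal.Quotient.mk _ Polynomial.X

/-- `s_i = 1 - (1-x)^{ζ^i}` truncated mod `X^p`. -/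
noncomputable def sElt (p : ℕ) [Fact p.Prime] (ζ : ℤ_[p]) (i : ℕ) : TruncV p :=
  1 - ∑ m ∈ Finset.range p, pbinom p ((ζ : ℚ_[p]) ^ i) m • (-xV p) ^ m

/-!
Write `s_i = 1 - E(ζ^i)`, where `E(t)` is the image in `V` of the binomial series `(1 - X)^t`.
Since `E(a) E(b) = E(a + b)`, the binomial theorem gives `s_i^n = ∑_j (-1)^j C(n,j) E(j ζ^i)`.
The coefficient of `X^m` in `E(t)` is a polynomial of degree `m` in `t`, and summing a polynomial
of degree `≤ p - 1` over the `(p-1)`-st roots of unity kills every monomial except `t^0` and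
`t^(p-1)`. The constant terms cancel because `∑_j (-1)^j C(n,j) = 0`, so only `x^(p-1)` survives,
with coefficient `c = (-1)^(p-1) (p-1) / (p-1)! · ∑_j (-1)^j C(n,j) j^(p-1)`. Modulo `p`, Fermat's
little theorem turns the last sum into `∑_{j ≥ 1} (-1)^j C(n,j) = -1`, and Wilson's theorem
gives `c ≡ -1`.
-/

open Finset Nat

section Truncation

variable {R : Type*} [CommRing R]

theorem Polynomial.mk_trunc_coe (N : ℕ) (P : R[X]) :
    Ideal.Quotient.mk (Ideal.span {(X : R[X]) ^ N}) (PowerSeries.trunc N (P : PowerSeries R)) =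
      Ideal.Quotient.mk _ P := by
  rw [Ideal.Quotient.eq, Ideal.mem_span_singleton, X_pow_dvd_iff]
  intro d hd
  simp [PowerSeries.coeff_trunc, hd]

variable (R) in
noncomputable def PowerSeries.modXPow (N : ℕ) :
    PowerSeries R →+* R[X] ⧸ Ideal.span {(Polynomial.X : R[X]) ^ N} where
  toFun f := Ideal.Quotient.mk _ (trunc N f)
  map_one' := by rw [← Polynomial.coe_one, mk_trunc_coe, map_one]
  map_mul' f g := by
    rw [← map_mul, ← mk_trunc_coe N (trunc N f * trunc N g), Polynomial.coe_mul,
      trunc_trunc_mul_trunc]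
  map_zero' := by simp
  map_add' f g := by simp

theorem PowerSeries.modXPow_rescale (N : ℕ) (a : R) (f : PowerSeries R) :
    modXPow R N (rescale a f) =
      ∑ m ∈ range N, coeff m f • (a • Ideal.Quotient.mk _ (Polynomial.X : R[X])) ^ m := by
  simp only [modXPow, RingHom.coe_mk, MonoidHom.coe_mk, OneHom.coe_mk, trunc_apply, map_sum,
    coeff_rescale, _root_.smul_pow, smul_smul, ← Polynomial.C_mul_X_pow_eq_monomial, map_mul]
  rw [Nat.Ico_zero_eq_range]
  refine sum_congr rfl fun m _ => ?_
  rw [← map_pow, ← map_mul, ← map_mul]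
  change _ = Ideal.Quotient.mk _ ((coeff m f * a ^ m) • Polynomial.X ^ m)
  rw [Polynomial.smul_eq_C_mul, Polynomial.C_mul, Polynomial.C_pow, mul_comm (Polynomial.C _)]

end Truncation

section RootsOfUnity

variable {R : Type*} [CommRing R] [IsDomain R] {ζ : R} {d : ℕ}

theorem IsPrimitiveRoot.sum_pow_pow (hζ : IsPrimitiveRoot ζ d) (k : ℕ) :
    ∑ i ∈ range d, (ζ ^ i) ^ k = if d ∣ k then (d : R) else 0 := by
  simp_rw [← pow_mul, mul_comm _ k, pow_mul]
  split_ifs with hdk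
  · simp [(hζ.pow_eq_one_iff_dvd k).2 hdk]
  · have hne : ζ ^ k - 1 ≠ 0 := sub_ne_zero.2 (mt (hζ.pow_eq_one_iff_dvd k).1 hdk)
    have h := geom_sum_mul (ζ ^ k) d
    rw [← pow_mul, mul_comm k d, pow_mul, hζ.pow_eq_one, one_pow, sub_self] at h
    exact (mul_eq_zero.1 h).resolve_right hne

theorem IsPrimitiveRoot.sum_eval_mul_pow (hζ : IsPrimitiveRoot ζ d) {P : R[X]}
    (hP : P.natDegree ≤ d) (c : R) :
    ∑ i ∈ range d, P.eval (c * ζ ^ i) = d * (P.coeff 0 + P.coeff d * c ^ d) := by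
  rcases d.eq_zero_or_pos with rfl | hd
  · simp
  simp_rw [eval_eq_sum_range' (Nat.lt_succ_of_le hP), mul_pow]
  rw [sum_comm]
  simp_rw [← mul_assoc, ← mul_sum, hζ.sum_pow_pow]
  rw [sum_range_succ, sum_eq_single_of_mem 0 (by simp [hd])]
  · simp only [pow_zero, mul_one, dvd_zero, ↓reduceIte, dvd_refl]
    ring
  · intro k hk hk0
    rw [if_neg, mul_zero]
    exact fun h => hk0 (Nat.eq_zero_of_dvd_of_lt h (mem_range.1 hk))

end RootsOfUnity

section BinomialSeries

variable {R A : Type*} [CommRing R] [BinomialRing R] [CommRing A] [Algebra R A]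

theorem PowerSeries.binomialSeries_nsmul (t : R) (j : ℕ) :
    binomialSeries A (j • t) = binomialSeries A t ^ j := by
  induction j with
  | zero => simp
  | succ j ih => rw [succ_nsmul, binomialSeries_add, ih, pow_succ]

theorem PowerSeries.one_sub_binomialSeries_pow (t : R) (n : ℕ) :
    (1 - binomialSeries A t) ^ n =
      ∑ j ∈ range (n + 1), ((-1) ^ j * n.choose j : ℤ) • binomialSeries A (j • t) := by
  rw [sub_eq_neg_add, add_pow]
  refine sum_congr rfl fun j _ => ?_
  rw [binomialSeries_nsmul, neg_pow, zsmul_eq_mul]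
  push_cast
  ring

end BinomialSeries

section ChoosePoly

variable (K : Type*) [Field K]

noncomputable def choosePoly (m : ℕ) : K[X] :=
  C (m ! : K)⁻¹ * descPochhammer K m

variable {K}

theorem eval_choosePoly [CharZero K] (m : ℕ) (y : K) :
    (choosePoly K m).eval y = Ring.choose y m := by
  rw [choosePoly, eval_mul, eval_C, Ring.choose_eq_smul, smul_eq_mul,
    ← descPochhammer_map (algebraMap ℤ K), eval_map, ← aeval_def, aeval_eq_smeval]

theorem natDegree_choosePoly_le (m : ℕ) : (choosePoly K m).natDegree ≤ m :=
  (natDegree_C_mul_le _ _).trans (descPochhammer_natDegree K m).le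

theorem coeff_choosePoly_self [CharZero K] (m : ℕ) : (choosePoly K m).coeff m = (m ! : K)⁻¹ := by
  have h := (monic_descPochhammer K m).coeff_natDegree
  rw [descPochhammer_natDegree] at h
  rw [choosePoly, coeff_C_mul, h, mul_one]

end ChoosePoly

section Identity

variable {K : Type*} [Field K] [CharZero K] {ζ : K} {d n : ℕ}

theorem coeff_sum_one_sub_binomialSeries_pow (hζ : IsPrimitiveRoot ζ d) (hn : n ≠ 0) {m : ℕ}
    (hm : m ≤ d) :
    PowerSeries.coeff m (∑ i ∈ range d, (1 - PowerSeries.binomialSeries K (ζ ^ i)) ^ n) =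
      d * (choosePoly K m).coeff d *
        ∑ j ∈ range (n + 1), (-1) ^ j * n.choose j * (j : K) ^ d := by
  have hsum : ∑ j ∈ range (n + 1), (-1) ^ j * (n.choose j : K) = 0 := by
    exact_mod_cast Int.alternating_sum_range_choose_of_ne hn
  simp_rw [PowerSeries.one_sub_binomialSeries_pow, map_sum, map_zsmul,
    PowerSeries.binomialSeries_coeff, smul_eq_mul, mul_one, zsmul_eq_mul, nsmul_eq_mul,
    ← eval_choosePoly]
  rw [sum_comm]
  simp_rw [← mul_sum, hζ.sum_eval_mul_pow ((natDegree_choosePoly_le m).trans hm)]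
  push_cast
  set P := choosePoly K m
  have hsplit : ∀ j : ℕ, (-1) ^ j * (n.choose j : K) * (d * (P.coeff 0 + P.coeff d * j ^ d)) =
      d * P.coeff 0 * ((-1) ^ j * n.choose j) + d * P.coeff d * ((-1) ^ j * n.choose j * j ^ d) :=
    fun j => by ring
  rw [sum_congr rfl fun j _ => hsplit j, sum_add_distrib, ← mul_sum, ← mul_sum, hsum, mul_zero,
    zero_add]

theorem sum_one_sub_truncated_binomial_pow (hζ : IsPrimitiveRoot ζ d) (hn : n ≠ 0) {N : ℕ}
    (hN : N = d + 1) :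
    ∑ i ∈ range d, (1 - ∑ m ∈ range N, Ring.choose (ζ ^ i) m •
        (-Ideal.Quotient.mk (Ideal.span {(X : K[X]) ^ N}) X) ^ m) ^ n =
      ((((-1) ^ d * d * ∑ j ∈ range (n + 1), (-1) ^ j * n.choose j * (j : ℤ) ^ d : ℤ) : K) / d !) •
        Ideal.Quotient.mk (Ideal.span {(X : K[X]) ^ N}) X ^ d := by
  subst hN
  set x := Ideal.Quotient.mk (Ideal.span {(X : K[X]) ^ (d + 1)}) X
  set T := (PowerSeries.modXPow K (d + 1)).comp (PowerSeries.rescale (-1 : K))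
  have hT (f : PowerSeries K) : T f = ∑ m ∈ range (d + 1), PowerSeries.coeff m f • (-x) ^ m := by
    rw [RingHom.comp_apply, PowerSeries.modXPow_rescale, neg_one_smul]
  have hs (t : K) : 1 - ∑ m ∈ range (d + 1), Ring.choose t m • (-x) ^ m =
      T (1 - PowerSeries.binomialSeries K t) := by
    rw [map_sub, map_one, hT]
    simp only [PowerSeries.binomialSeries_coeff, smul_eq_mul, mul_one]
  simp_rw [hs, ← map_pow, ← map_sum, hT]
  rw [sum_eq_single_of_mem d (self_mem_range_succ d)]
  · rw [coeff_sum_one_sub_binomialSeries_pow hζ hn le_rfl, coeff_choosePoly_self,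
      ← neg_one_smul K x, _root_.smul_pow, smul_smul]
    congr 1
    push_cast
    ring
  · intro m hm hmd
    rw [coeff_sum_one_sub_binomialSeries_pow hζ hn (mem_range_succ_iff.1 hm),
      coeff_eq_zero_of_natDegree_lt ((natDegree_choosePoly_le m).trans_lt
        (lt_of_le_of_ne (mem_range_succ_iff.1 hm) hmd)), mul_zero, zero_mul, zero_smul]

end Identity

theorem ZMod.sum_neg_one_pow_mul_choose_mul_pow_card_sub_one {p : ℕ} [Fact p.Prime] {n : ℕ}
    (hn : n ≠ 0) (hnp : n < p) :
    ∑ j ∈ range (n + 1), (-1) ^ j * n.choose j * (j : ZMod p) ^ (p - 1) = -1 := by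
  have hsum : ∑ j ∈ range (n + 1), (-1) ^ j * (n.choose j : ZMod p) = 0 := by
    simpa using congrArg (Int.cast : ℤ → ZMod p) (Int.alternating_sum_range_choose_of_ne hn)
  have hfermat : ∀ j ∈ range (n + 1), (j : ZMod p) ^ (p - 1) = 1 - if j = 0 then 1 else 0 := by
    intro j hj
    split_ifs with hj0
    · simp [hj0, Nat.sub_ne_zero_of_lt (Fact.out : p.Prime).one_lt]
    · rw [sub_zero]
      apply ZMod.pow_card_sub_one_eq_one
      rw [Ne, ZMod.natCast_eq_zero_iff]
      exact fun h => hj0 (Nat.eq_zero_of_dvd_of_lt h (by grind))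
  rw [sum_congr rfl fun j hj => by rw [hfermat j hj]]
  simp [mul_sub, sum_sub_distrib, hsum]

section Padic

variable {p : ℕ} [Fact p.Prime]

theorem Padic.norm_intCast_div_natCast_le_one (a : ℤ) {b : ℕ} (hb : p.Coprime b) :
    ‖(a / b : ℚ_[p])‖ ≤ 1 := by
  rw [norm_div, Padic.norm_natCast_eq_one_iff.2 hb, div_one]
  exact Padic.norm_int_le_one a

theorem Padic.norm_intCast_div_natCast_add_one_le {a : ℤ} {b : ℕ} (hb : p.Coprime b)
    (hab : (p : ℤ) ∣ a + b) : ‖(a / b : ℚ_[p]) + 1‖ ≤ (p : ℝ)⁻¹ := by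
  have hb' : (b : ℚ_[p]) ≠ 0 := by
    intro h
    simpa [h] using Padic.norm_natCast_eq_one_iff.2 hb
  rw [div_add_one hb', norm_div, Padic.norm_natCast_eq_one_iff.2 hb, div_one]
  simpa using (Padic.norm_int_le_pow_iff_dvd (a + b) 1).2 (by simpa using hab)

end Padic

theorem pbinom_eq_choose (p : ℕ) [Fact p.Prime] (y : ℚ_[p]) (m : ℕ) :
    pbinom p y m = Ring.choose y m := by
  rw [pbinom, ← eval_choosePoly, choosePoly, eval_mul, eval_C, div_eq_inv_mul]

theorem sum_pow_top_coeff_general (p : ℕ) [Fact p.Prime] (ζ : ℤ_[p])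
    (hord : orderOf ζ = p - 1)
    (n : ℕ) (hn1 : 1 ≤ n) (hn2 : n ≤ p - 1) :
    ∃ c : ℚ_[p],
      (∑ i ∈ Finset.range (p - 1), (sElt p ζ i) ^ n = c • xV p ^ (p - 1)) ∧
      ‖c‖ ≤ 1 ∧ ‖c + 1‖ ≤ (p : ℝ)⁻¹ := by
  have hp : p.Prime := Fact.out
  have hζ : IsPrimitiveRoot (ζ : ℚ_[p]) (p - 1) :=
    hord ▸ (IsPrimitiveRoot.orderOf ζ).map_of_injective (f := PadicInt.Coe.ringHom)
      Subtype.coe_injective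
  have hcoprime : p.Coprime (p - 1)! := hp.coprime_factorial_of_lt (by omega)
  have hcong : (p : ℤ) ∣ (-1) ^ (p - 1) * (p - 1 : ℕ) *
      (∑ j ∈ range (n + 1), (-1) ^ j * n.choose j * (j : ℤ) ^ (p - 1)) + (p - 1)! := by
    rw [← ZMod.intCast_zmod_eq_zero_iff_dvd]
    push_cast
    rw [ZMod.sum_neg_one_pow_mul_choose_mul_pow_card_sub_one (by omega) (by omega),
      ZMod.wilsons_lemma, ZMod.pow_card_sub_one_eq_one (neg_ne_zero.2 one_ne_zero),
      Nat.cast_sub hp.one_le, ZMod.natCast_self]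
    ring
  refine ⟨_, ?_, Padic.norm_intCast_div_natCast_le_one _ hcoprime,
    Padic.norm_intCast_div_natCast_add_one_le hcoprime hcong⟩
  simp_rw [sElt, pbinom_eq_choose]
  exact sum_one_sub_truncated_binomial_pow hζ (by omega) (by omega)

/-- For `1 ≤ n ≤ p-1`, the coefficient `c` of `x^{p-1}` in `Σ_{i=0}^{p-2} s_i^n` lies in
`ℤ_p` and is congruent to `-1 (mod p)`, i.e. `|c + 1|_p ≤ 1/p`. -/
theorem sum_pow_top_coeff (p : ℕ) [Fact p.Prime] (hp : Odd p) (ζ : ℤ_[p])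
    (hζ : ζ ^ (p - 1) = 1) (hord : orderOf ζ = p - 1)
    (n : ℕ) (hn1 : 1 ≤ n) (hn2 : n ≤ p - 1) :
    ∃ c : ℚ_[p],
      (∑ i ∈ Finset.range (p - 1), (sElt p ζ i) ^ n = c • xV p ^ (p - 1)) ∧
      ‖c‖ ≤ 1 ∧ ‖c + 1‖ ≤ (p : ℝ)⁻¹ :=
  sum_pow_top_coeff_general p ζ hord n hn1 hn2
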